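/- arXiv:1912.10138 — 7 statements merged into one kernel-verified Lean document; each statement's English description precedes it below -/
import Mathlib

section
/- Any set of k points in ℝⁿ (n ≥ 1) can be covered by a union of at most max{1, k-n+1} parallel hyperplanes. -/
open scoped RealInnerProductSpace

/-- `S` can be covered by at most `m` parallel hyperplanes: there is a common nonzero
normal vector `v` and at most `m` values `c` such that every point of `S` lies on one
of the hyperplanes `{x | ⟪v, x⟫ = c}`. -/
def CoveredByParallelHyperplanes {n : ℕ} (S : Set (EuclideanSpace ℝ (Fin n))) (m : ℕ) : Prop :=
  ∃ v : EuclideanSpace ℝ (Fin n), v ≠ 0 ∧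
    ∃ C : Finset ℝ, C.card ≤ m ∧ ∀ x ∈ S, ⟪v, x⟫ ∈ C

/-!
Any `n` points of `ℝⁿ` span an affine subspace of dimension at most `n - 1`, so they lie on
one hyperplane `⟪v, x⟫ = c`. Given `k ≥ n` points, put `n` of them on such a hyperplane and
cover each of the remaining `k - n` points by a parallel one, for `k - n + 1` hyperplanes in all.
-/

open Module

lemma Finset.card_image_le_card_sdiff_add_one {α β : Type*} [DecidableEq α] [DecidableEq β]
    {f : α → β} {s t : Finset α} (hts : t ⊆ s) (ht : (t.image f).card ≤ 1) :
    (s.image f).card ≤ (s \ t).card + 1 :=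
  calc (s.image f).card = ((s \ t).image f ∪ t.image f).card := by
        rw [← Finset.image_union, Finset.sdiff_union_of_subset hts]
    _ ≤ ((s \ t).image f).card + (t.image f).card := Finset.card_union_le _ _
    _ ≤ (s \ t).card + 1 := add_le_add Finset.card_image_le ht

lemma finrank_vectorSpan_finset_lt_finrank {k V : Type*} [DivisionRing k] [AddCommGroup V]
    [Module k V] (T : Finset V) (hV : 0 < finrank k V) (hT : T.card ≤ finrank k V) :
    finrank k (vectorSpan k (T : Set V)) < finrank k V := by
  classical
  rcases T.eq_empty_or_nonempty with rfl | hne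
  · rwa [Finset.coe_empty, vectorSpan_empty, finrank_bot]
  · obtain ⟨m, hm⟩ := Nat.exists_eq_add_one_of_ne_zero hne.card_pos.ne'
    have := finrank_vectorSpan_image_finset_le k id T hm
    rw [Finset.image_id] at this
    omega

section InnerProductSpace

variable {E : Type*} [NormedAddCommGroup E] [InnerProductSpace ℝ E] [FiniteDimensional ℝ E]

lemma exists_ne_zero_card_image_inner_le_one (T : Finset E) (hE : 0 < finrank ℝ E)
    (hT : T.card ≤ finrank ℝ E) :
    ∃ v : E, v ≠ 0 ∧ (T.image (⟪v, ·⟫)).card ≤ 1 := by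
  have hlt := finrank_vectorSpan_finset_lt_finrank T hE hT
  have hne_top : vectorSpan ℝ (T : Set E) ≠ ⊤ := fun h => by
    rw [h, finrank_top] at hlt
    exact lt_irrefl _ hlt
  obtain ⟨v, hv, hv0⟩ := Submodule.exists_mem_ne_zero_of_ne_bot
    (mt Submodule.orthogonal_eq_bot_iff.mp hne_top)
  refine ⟨v, hv0, Finset.card_le_one.mpr ?_⟩
  simp only [Finset.mem_image]
  rintro _ ⟨x, hx, rfl⟩ _ ⟨y, hy, rfl⟩
  have hxy : ⟪x - y, v⟫ = 0 := hv _ (vsub_mem_vectorSpan ℝ hx hy)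
  rw [inner_sub_left, real_inner_comm v x, real_inner_comm v y] at hxy
  exact sub_eq_zero.mp hxy

theorem exists_ne_zero_card_image_inner_le (S : Finset E) (hE : 0 < finrank ℝ E) :
    ∃ v : E, v ≠ 0 ∧ (S.image (⟪v, ·⟫)).card ≤ max 1 (S.card - finrank ℝ E + 1) := by
  classical
  obtain ⟨T, hTS, hTcard⟩ := Finset.exists_subset_card_eq (min_le_left S.card (finrank ℝ E))
  obtain ⟨v, hv0, hT⟩ := exists_ne_zero_card_image_inner_le_one T hE (hTcard ▸ min_le_right _ _)
  refine ⟨v, hv0, (Finset.card_image_le_card_sdiff_add_one hTS hT).trans ?_⟩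
  rw [Finset.card_sdiff_of_subset hTS, hTcard]
  omega

end InnerProductSpace

theorem stmt0 {n k : ℕ} (hn : 1 ≤ n) (S : Set (EuclideanSpace ℝ (Fin n)))
    (hS : S.Finite) (hcard : S.ncard = k) :
    CoveredByParallelHyperplanes S (max 1 (k - n + 1)) := by
  have hdim : finrank ℝ (EuclideanSpace ℝ (Fin n)) = n := finrank_euclideanSpace_fin
  obtain ⟨v, hv0, hC⟩ := exists_ne_zero_card_image_inner_le hS.toFinset (hdim.symm ▸ hn)
  refine ⟨v, hv0, _, ?_, fun x hx => Finset.mem_image_of_mem _ (hS.mem_toFinset.mpr hx)⟩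
  rwa [← Set.ncard_eq_toFinset_card S hS, hcard, hdim] at hC
end

section
/- If S ⊆ Cₙ(T) = {x ∈ ℤⁿ : ‖x‖_∞ ≤ T} has cardinality k and cannot be covered by fewer than k-n+1 parallel hyperplanes, then k ≤ 2T+n. -/
open scoped RealInnerProductSpace

/-- The integer cube `Cₙ(T) = {x ∈ ℤⁿ : ‖x‖_∞ ≤ T}`, viewed inside `ℝⁿ`. -/
def IntCube (n : ℕ) (T : ℕ) : Set (EuclideanSpace ℝ (Fin n)) :=
  {x | ∀ i : Fin n, (∃ m : ℤ, x i = (m : ℝ)) ∧ |x i| ≤ (T : ℝ)}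

namespace CoveredByParallelHyperplanes

variable {n : ℕ} {S S' : Set (EuclideanSpace ℝ (Fin n))} {m m' : ℕ}

theorem mono (h : CoveredByParallelHyperplanes S m) (hS : S' ⊆ S) (hm : m ≤ m') :
    CoveredByParallelHyperplanes S' m' := by
  obtain ⟨v, hv, C, hC, hmem⟩ := h
  exact ⟨v, hv, C, hC.trans hm, fun x hx => hmem x (hS hx)⟩

end CoveredByParallelHyperplanes

theorem mem_image_intCast_Icc_of_mem_intCube {n T : ℕ} {x : EuclideanSpace ℝ (Fin n)}
    (hx : x ∈ IntCube n T) (i : Fin n) :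
    x i ∈ (Finset.Icc (-(T : ℤ)) T).image (Int.cast : ℤ → ℝ) := by
  obtain ⟨⟨a, ha⟩, hbound⟩ := hx i
  rw [ha, abs_le] at hbound
  rw [ha, Finset.mem_image]
  exact ⟨a, Finset.mem_Icc.2
    ⟨Int.cast_le.1 (by simpa using hbound.1), Int.cast_le.1 (by simpa using hbound.2)⟩, rfl⟩

theorem intCube_coveredByParallelHyperplanes {n : ℕ} (i : Fin n) (T : ℕ) :
    CoveredByParallelHyperplanes (IntCube n T) (2 * T + 1) := by
  refine ⟨EuclideanSpace.single i 1, by simp,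
    (Finset.Icc (-(T : ℤ)) T).image Int.cast, ?_, ?_⟩
  · calc ((Finset.Icc (-(T : ℤ)) T).image (Int.cast : ℤ → ℝ)).card
        ≤ (Finset.Icc (-(T : ℤ)) T).card := Finset.card_image_le
      _ = 2 * T + 1 := by rw [Int.card_Icc]; omega
  · intro x hx
    rw [EuclideanSpace.inner_single_left, map_one, one_mul]
    exact mem_image_intCast_Icc_of_mem_intCube hx i

theorem stmt1_general {n T k : ℕ} (hn : 1 ≤ n)
    (S : Set (EuclideanSpace ℝ (Fin n))) (hS : S ⊆ IntCube n T)
    (hcover : ¬ CoveredByParallelHyperplanes S (k - n)) :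
    k ≤ 2 * T + n := by
  by_contra! hk
  exact hcover <| (intCube_coveredByParallelHyperplanes ⟨0, hn⟩ T).mono hS (by omega)

theorem stmt1 {n T k : ℕ} (hn : 1 ≤ n) (hT : 1 ≤ T)
    (S : Set (EuclideanSpace ℝ (Fin n))) (hS : S ⊆ IntCube n T)
    (hfin : S.Finite) (hcard : S.ncard = k)
    (hcover : ¬ CoveredByParallelHyperplanes S (k - n)) :
    k ≤ 2 * T + n :=
  stmt1_general hn S hS hcover
end

section
/- If S ⊆ Cₙ(T) has cardinality k < 2T+n, then S can be covered by at most 2T parallel hyperplanes. Equivalently, if 2T+1 parallel hyperplanes are required to cover S, then |S| ≥ 2T+n. -/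
open scoped RealInnerProductSpace

/-!
Any `n` points of `ℝⁿ` lie on one affine hyperplane: a normal vector is any nonzero vector
orthogonal to their vector span, which has dimension at most `n - 1`. The hyperplanes orthogonal
to that vector through the remaining `|S| - n < 2T` points then complete the cover.
-/

open Module Finset
open scoped InnerProductSpace

theorem finrank_vectorSpan_finset_lt {k V : Type*} [DivisionRing k] [AddCommGroup V]
    [Module k V] {t : Finset V} (ht : #t ≤ finrank k V) (hV : 0 < finrank k V) :
    finrank k (vectorSpan k (t : Set V)) < finrank k V := by
  classical
  rcases t.eq_empty_or_nonempty with rfl | ht_ne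
  · rwa [coe_empty, vectorSpan_empty, finrank_bot]
  · have hcard : #t = (#t - 1) + 1 := (Nat.sub_add_cancel ht_ne.card_pos).symm
    have hspan := finrank_vectorSpan_image_finset_le k id t hcard
    rw [image_id] at hspan
    omega

section

variable {𝕜 E : Type*} [RCLike 𝕜] [NormedAddCommGroup E] [InnerProductSpace 𝕜 E]

theorem Submodule.exists_mem_orthogonal_ne_zero_of_finrank_lt {K : Submodule 𝕜 E}
    (hK : finrank 𝕜 K < finrank 𝕜 E) : ∃ v ∈ Kᗮ, v ≠ 0 := by
  have : FiniteDimensional 𝕜 E := Module.finite_of_finrank_pos (Nat.zero_lt_of_lt hK)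
  have hK_ne_top : K ≠ ⊤ := by
    rintro rfl
    exact hK.ne (finrank_top 𝕜 E)
  exact Submodule.exists_mem_ne_zero_of_ne_bot (mt Submodule.orthogonal_eq_bot_iff.mp hK_ne_top)

theorem exists_ne_zero_inner_eq_of_card_le_finrank {t : Finset E} (ht : #t ≤ finrank 𝕜 E)
    (hE : 0 < finrank 𝕜 E) : ∃ v : E, v ≠ 0 ∧ ∀ x ∈ t, ∀ y ∈ t, ⟪v, x⟫_𝕜 = ⟪v, y⟫_𝕜 := by
  obtain ⟨v, hv, hv0⟩ :=
    Submodule.exists_mem_orthogonal_ne_zero_of_finrank_lt (finrank_vectorSpan_finset_lt ht hE)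
  refine ⟨v, hv0, fun x hx y hy => ?_⟩
  have hxy := Submodule.inner_left_of_mem_orthogonal
    (vsub_mem_vectorSpan 𝕜 (mem_coe.mpr hx) (mem_coe.mpr hy)) hv
  rwa [vsub_eq_sub, inner_sub_right, sub_eq_zero] at hxy

theorem exists_ne_zero_card_image_inner_le_s2 {s : Finset E} {m : ℕ} (hm : 1 ≤ m)
    (hs : #s < m + finrank 𝕜 E) (hE : 0 < finrank 𝕜 E) :
    ∃ v : E, v ≠ 0 ∧ #(s.image (⟪v, ·⟫_𝕜)) ≤ m := by
  classical
  obtain ⟨t, hts, ht⟩ := s.exists_subset_card_eq (min_le_left #s (finrank 𝕜 E))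
  obtain ⟨v, hv0, hv⟩ := exists_ne_zero_inner_eq_of_card_le_finrank (ht ▸ min_le_right _ _) hE
  refine ⟨v, hv0, ?_⟩
  have h_t : #(t.image (⟪v, ·⟫_𝕜)) ≤ 1 := by
    simpa only [card_le_one, forall_mem_image] using hv
  have h_rest : #((s \ t).image (⟪v, ·⟫_𝕜)) ≤ m - 1 := by
    refine card_image_le.trans ?_
    rw [card_sdiff_of_subset hts, ht]
    omega
  calc #(s.image (⟪v, ·⟫_𝕜))
      = #(((s \ t) ∪ t).image (⟪v, ·⟫_𝕜)) := by rw [sdiff_union_of_subset hts]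
    _ ≤ #((s \ t).image (⟪v, ·⟫_𝕜)) + #(t.image (⟪v, ·⟫_𝕜)) := by
        rw [image_union]; exact card_union_le _ _
    _ ≤ m := by omega

end

theorem stmt2_general {n T k : ℕ} (hn : 1 ≤ n) (hT : 1 ≤ T)
    (S : Set (EuclideanSpace ℝ (Fin n)))
    (hfin : S.Finite) (hcard : S.ncard = k)
    (hk : k < 2 * T + n) :
    CoveredByParallelHyperplanes S (2 * T) := by
  have hS : #hfin.toFinset < 2 * T + finrank ℝ (EuclideanSpace ℝ (Fin n)) := by
    rwa [finrank_euclideanSpace_fin, ← Set.ncard_eq_toFinset_card S hfin, hcard]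
  obtain ⟨v, hv0, hv⟩ := exists_ne_zero_card_image_inner_le_s2 (by omega) hS
    (by rwa [finrank_euclideanSpace_fin])
  exact ⟨v, hv0, _, hv, fun x hx => mem_image_of_mem _ (hfin.mem_toFinset.mpr hx)⟩

theorem stmt2 {n T k : ℕ} (hn : 1 ≤ n) (hT : 1 ≤ T)
    (S : Set (EuclideanSpace ℝ (Fin n))) (hS : S ⊆ IntCube n T)
    (hfin : S.Finite) (hcard : S.ncard = k)
    (hk : k < 2 * T + n) :
    CoveredByParallelHyperplanes S (2 * T) :=
  stmt2_general hn hT S hfin hcard hk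
end

section
/- For each n ≥ 1, the set Sₙ = {0, x₁, ..., x_{n+1}} ⊂ ℝⁿ, where xᵢ = -e_{n-i+1} + Σ_{j=n-i+2}^{n} e_j for 1 ≤ i ≤ n and x_{n+1} = (1,...,1), has cardinality n+2 and cannot be covered by two parallel hyperplanes. -/
open scoped RealInnerProductSpace

/-- For `1 ≤ i ≤ n`, the vector `xᵢ = -e_{n-i+1} + Σ_{j=n-i+2}^n e_j`; for `i = n+1`
this gives the all-ones vector `(1,…,1)`.  (Coordinates are 0-indexed: coordinate `t`
is `0` if `t + i < n`, `-1` if `t + i = n`, and `1` if `t + i > n`.) -/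
def xvec (n : ℕ) (i : ℕ) : EuclideanSpace ℝ (Fin n) := WithLp.toLp 2 fun t =>
  if (t : ℕ) + i < n then 0 else if (t : ℕ) + i = n then -1 else 1

/-- The set `Sₙ = {0, x₁, …, x_{n+1}}`. -/
def Sset (n : ℕ) : Set (EuclideanSpace ℝ (Fin n)) :=
  {0} ∪ {y | ∃ i : ℕ, 1 ≤ i ∧ i ≤ n + 1 ∧ y = xvec n i}

/-
The point `0 ∈ Sₙ` forces one of the two hyperplanes `⟪v, x⟫ = c₁`, `⟪v, x⟫ = c₂` to pass through
the origin, so every value `⟪v, xᵢ⟫` is `0` or some fixed `c`, whence `c ⟪v, xᵢ⟫ = ⟪v, xᵢ⟫²`.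
The points satisfy the relation `∑_{k<n} 2ᵏ x_{n-k} + x_{n+1} = 0` with positive coefficients;
pairing it with `v` and multiplying by `c` gives a positive combination of the squares
`⟪v, xᵢ⟫²` equal to `0`. Hence `v` is orthogonal to `x₁, …, xₙ`, which form a triangular basis,
so `v = 0`.
-/

section

variable {n : ℕ}

lemma xvec_apply_eq_zero_iff (i : ℕ) (t : Fin n) : xvec n i t = 0 ↔ (t : ℕ) + i < n := by
  simp only [xvec]
  split_ifs <;> norm_num <;> omega

lemma xvec_apply_eq_neg_one_iff (i : ℕ) (t : Fin n) : xvec n i t = -1 ↔ (t : ℕ) + i = n := by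
  simp only [xvec]
  split_ifs <;> norm_num <;> omega

lemma xvec_ne_zero (hn : 1 ≤ n) {i : ℕ} (hi : 1 ≤ i) : xvec n i ≠ 0 := by
  intro h
  have := (xvec_apply_eq_zero_iff i (⟨n - 1, by omega⟩ : Fin n)).mp (by rw [h]; rfl)
  simp only at this
  omega

lemma injOn_xvec : Set.InjOn (xvec n) (Set.Icc 1 (n + 1)) := by
  intro i hi j hj hij
  wlog hlt : i < j generalizing i j
  · rcases (not_lt.mp hlt).lt_or_eq with h | h
    · exact (this hj hi hij.symm h).symm
    · exact h.symm
  have hi₁ := hi.1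
  have hj₂ := hj.2
  have hdiag : xvec n i ⟨n - i, by omega⟩ = -1 := (xvec_apply_eq_neg_one_iff _ _).mpr (by simp; omega)
  rw [hij, xvec_apply_eq_neg_one_iff] at hdiag
  simp only at hdiag
  omega

/-- Partial sums of the relation `∑ₖ 2ᵏ x_{n-k} = -(1,…,1)`, which holds coordinatewise. -/
lemma sum_two_pow_mul_xvec_apply (t : Fin n) (m : ℕ) :
    ∑ k ∈ Finset.range m, (2 : ℝ) ^ k * xvec n (n - k) t =
      if (t : ℕ) < m then -1 else 2 ^ m - 1 := by
  induction m with
  | zero => simp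
  | succ m ih =>
    have ht := t.isLt
    rw [Finset.sum_range_succ, ih]
    simp only [xvec]
    split_ifs <;> first | omega | ring

lemma sum_two_pow_smul_xvec_add_xvec_succ :
    ∑ k ∈ Finset.range n, (2 : ℝ) ^ k • xvec n (n - k) + xvec n (n + 1) = 0 := by
  ext t
  have hlast : xvec n (n + 1) t = 1 := by
    have ht := t.isLt
    simp only [xvec]
    rw [if_neg (by omega), if_neg (by omega)]
  simp [sum_two_pow_mul_xvec_apply, hlast]

lemma inner_xvec_sub_eq_neg {v : EuclideanSpace ℝ (Fin n)} (t : Fin n)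
    (hv : ∀ u, t < u → v u = 0) : ⟪v, xvec n (n - t)⟫ = -v t := by
  have ht := t.isLt
  rw [PiLp.inner_apply, Finset.sum_eq_single t]
  · simp [(xvec_apply_eq_neg_one_iff (n - t) t).mpr (by omega)]
  · intro u _ hut
    rcases lt_or_gt_of_ne hut with h | h
    · simp [(xvec_apply_eq_zero_iff (n - t) u).mpr (by simp only [Fin.lt_def] at h; omega)]
    · simp [hv u h]
  · simp

/-- The vectors `x₁, …, xₙ` span the space: they are triangular with diagonal entries `-1`. -/
lemma eq_zero_of_inner_xvec_eq_zero {v : EuclideanSpace ℝ (Fin n)}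
    (hv : ∀ i, 1 ≤ i → i ≤ n → ⟪v, xvec n i⟫ = 0) : v = 0 := by
  ext t
  induction t using WellFoundedGT.induction with
  | _ t ih =>
    have := inner_xvec_sub_eq_neg t ih
    rw [hv _ (by omega) (by omega)] at this
    simpa using this.symm

end

namespace Sset

variable {n : ℕ}

lemma eq_image_xvec :
    Sset n = ↑(insert 0 ((Finset.Icc 1 (n + 1)).image (xvec n))) := by
  ext y
  simp [Sset, eq_comm, and_assoc]

lemma ncard_eq (hn : 1 ≤ n) : (Sset n).ncard = n + 2 := by
  rw [eq_image_xvec, Set.ncard_coe_finset, Finset.card_insert_of_notMem,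
    Finset.card_image_of_injOn (by simpa using injOn_xvec)]
  · simp
  · simp only [Finset.mem_image, Finset.mem_Icc, not_exists, not_and]
    exact fun i hi => xvec_ne_zero hn hi.1

lemma not_coveredByParallelHyperplanes_two : ¬ CoveredByParallelHyperplanes (Sset n) 2 := by
  rintro ⟨v, hv, C, hC, hmem⟩
  have h0 : (0 : ℝ) ∈ C := by simpa using hmem 0 (Or.inl rfl)
  obtain ⟨c, hc⟩ : ∃ c, C.erase 0 ⊆ {c} :=
    Finset.card_le_one_iff_subset_singleton.mp (by rw [Finset.card_erase_of_mem h0]; omega)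
  set y : ℕ → ℝ := fun i => ⟪v, xvec n i⟫
  have hsq : ∀ i, 1 ≤ i → i ≤ n + 1 → c * y i = y i ^ 2 := by
    intro i hi hi'
    by_cases h : y i = 0
    · simp [h]
    · have hyc : y i = c := Finset.mem_singleton.mp
        (hc (Finset.mem_erase.mpr ⟨h, hmem _ (Or.inr ⟨i, hi, hi', rfl⟩)⟩))
      rw [hyc, sq]
  have hrel : ∑ k ∈ Finset.range n, 2 ^ k * y (n - k) + y (n + 1) = 0 := by
    have := congrArg (⟪v, ·⟫) (sum_two_pow_smul_xvec_add_xvec_succ (n := n))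
    simpa only [inner_add_right, inner_sum, inner_smul_right, inner_zero_right] using this
  have hrel_sq : ∑ k ∈ Finset.range n, 2 ^ k * y (n - k) ^ 2 + y (n + 1) ^ 2 = 0 := by
    calc _ = c * (∑ k ∈ Finset.range n, 2 ^ k * y (n - k) + y (n + 1)) := by
          rw [mul_add, Finset.mul_sum, hsq (n + 1) (by omega) le_rfl]
          refine congrArg (· + _) (Finset.sum_congr rfl fun k hk => ?_)
          rw [← hsq (n - k) (by simp at hk; omega) (by omega)]
          ring
      _ = 0 := by rw [hrel, mul_zero]
  have hnonneg : ∀ k ∈ Finset.range n, 0 ≤ (2 : ℝ) ^ k * y (n - k) ^ 2 := fun k _ => by positivity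
  have hterms := (Finset.sum_eq_zero_iff_of_nonneg hnonneg).mp
    (by linarith [sq_nonneg (y (n + 1)), Finset.sum_nonneg hnonneg])
  refine hv (eq_zero_of_inner_xvec_eq_zero fun i hi hi' => ?_)
  have := hterms (n - i) (by simp; omega)
  rw [Nat.sub_sub_self hi'] at this
  simpa using this

end Sset

theorem stmt3 {n : ℕ} (hn : 1 ≤ n) :
    (Sset n).ncard = n + 2 ∧ ¬ CoveredByParallelHyperplanes (Sset n) 2 :=
  ⟨Sset.ncard_eq hn, Sset.not_coveredByParallelHyperplanes_two⟩
end

section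
/- Let k > n and let x₁,...,x_{k-1} ∈ ℝⁿ be distinct nonzero vectors such that the set S = {0, x₁,...,x_{k-1}} cannot be covered by fewer than k-n+1 parallel hyperplanes. Then every n of the vectors x₁,...,x_{k-1} are linearly independent, i.e., the n×(k-1) matrix A with columns x₁,...,x_{k-1} has all n×n minors nonzero. -/
/-!
If `n` of the vectors were dependent, they would span a proper subspace, so some nonzero `v` is
orthogonal to all of them. The hyperplanes `⟪v, ·⟫ = c` with `c = 0` or `c = ⟪v, xᵢ⟫` for one of the
remaining `k - 1 - n` vectors then cover `S` with only `k - n` parallel hyperplanes.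
-/

open scoped RealInnerProductSpace

theorem exists_ne_zero_forall_inner_eq_zero_of_not_linearIndependent
    {𝕜 E ι : Type*} [RCLike 𝕜] [NormedAddCommGroup E] [InnerProductSpace 𝕜 E]
    [FiniteDimensional 𝕜 E] [Fintype ι] {u : ι → E} (hu : ¬ LinearIndependent 𝕜 u)
    (hcard : Fintype.card ι ≤ Module.finrank 𝕜 E) :
    ∃ v : E, v ≠ 0 ∧ ∀ i, inner 𝕜 v (u i) = 0 := by
  set K := Submodule.span 𝕜 (Set.range u)
  have hK : Module.finrank 𝕜 K < Module.finrank 𝕜 E := by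
    refine lt_of_lt_of_le (lt_of_le_of_ne (finrank_range_le_card u) fun h => hu ?_) hcard
    exact linearIndependent_iff_card_eq_finrank_span.2 h.symm
  have hKperp : Kᗮ ≠ ⊥ := by
    intro h
    have := K.finrank_add_finrank_orthogonal
    rw [h, finrank_bot] at this
    omega
  obtain ⟨v, hvK, hv0⟩ := Submodule.exists_mem_ne_zero_of_ne_bot hKperp
  exact ⟨v, hv0, fun i => Submodule.inner_left_of_mem_orthogonal
    (Submodule.subset_span (Set.mem_range_self i)) hvK⟩

theorem coveredByParallelHyperplanes_of_inner_eq_zero {n : ℕ} {ι : Type*} [Fintype ι]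
    [DecidableEq ι] (x : ι → EuclideanSpace ℝ (Fin n)) {v : EuclideanSpace ℝ (Fin n)}
    (hv : v ≠ 0) (s : Finset ι) (hs : ∀ i ∈ s, ⟪v, x i⟫ = 0) :
    CoveredByParallelHyperplanes ({0} ∪ Set.range x) (Fintype.card ι - s.card + 1) := by
  refine ⟨v, hv, insert 0 (sᶜ.image fun i => ⟪v, x i⟫), ?_, ?_⟩
  · calc _ ≤ (sᶜ.image fun i => ⟪v, x i⟫).card + 1 := Finset.card_insert_le _ _
      _ ≤ sᶜ.card + 1 := by gcongr; exact Finset.card_image_le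
      _ = Fintype.card ι - s.card + 1 := by rw [Finset.card_compl]
  · rintro y (rfl | ⟨i, rfl⟩)
    · simp
    · by_cases hi : i ∈ s
      · simp [hs i hi]
      · exact Finset.mem_insert_of_mem (Finset.mem_image_of_mem _ (Finset.mem_compl.2 hi))

theorem stmt9_general {n k : ℕ} (hk : n < k)
    (x : Fin (k - 1) → EuclideanSpace ℝ (Fin n))
    (hcover : ¬ CoveredByParallelHyperplanes ({0} ∪ Set.range x) (k - n)) :
    ∀ g : Fin n → Fin (k - 1), Function.Injective g →
      LinearIndependent ℝ (fun t => x (g t)) := by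
  intro g hg
  by_contra hdep
  obtain ⟨v, hv0, hv⟩ :=
    exists_ne_zero_forall_inner_eq_zero_of_not_linearIndependent hdep (by simp)
  have hs : ∀ i ∈ Finset.univ.image g, ⟪v, x i⟫ = 0 :=
    Finset.forall_mem_image.2 fun t _ => hv t
  have hcount : Fintype.card (Fin (k - 1)) - (Finset.univ.image g).card + 1 = k - n := by
    rw [Finset.card_image_of_injective _ hg]
    simp only [Fintype.card_fin, Finset.card_univ]
    omega
  exact hcover (hcount ▸ coveredByParallelHyperplanes_of_inner_eq_zero x hv0 _ hs)

theorem stmt9 {n k : ℕ} (hn : 1 ≤ n) (hk : n < k)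
    (x : Fin (k - 1) → EuclideanSpace ℝ (Fin n))
    (hinj : Function.Injective x) (hnz : ∀ i, x i ≠ 0)
    (hcover : ¬ CoveredByParallelHyperplanes ({0} ∪ Set.range x) (k - n)) :
    ∀ g : Fin n → Fin (k - 1), Function.Injective g →
      LinearIndependent ℝ (fun t => x (g t)) :=
  stmt9_general hk x hcover
end

section
/- Let S = {x₁,...,x_k} ⊂ ℝⁿ with k > n. If for every partition S = I_m ⊔ J_l (m, l ≥ 1, m+l = k), every n vectors in the full difference set D(I_m,J_l) = {xᵢ - x_j : xᵢ ∈ I_m, x_j ∈ J_l} are linearly independent, then S cannot be covered by fewer than k-n+1 parallel hyperplanes. -/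
open scoped RealInnerProductSpace

/-!
Let `φ` be a nonzero functional whose level sets are the hyperplanes, and suppose they are at
most `k - n` in number. Pick one point `x (r i)` on the level of each `x i`; the representatives
form a block `J₀` of at most `k - n` points, so `I₀ := J₀ᶜ` has at least `n` points, and the
differences `x i - x (r i)`, `i ∈ I₀`, lie in `D(I₀, J₀) ∩ ker φ`. If `n` of them are distinct,
they are `n` independent vectors in the `(n - 1)`-dimensional space `ker φ`. Otherwise two of
them coincide, `x i - x j = x i' - x j'` with `j ≠ j'`, and then `D({i, j'}, {i, j'}ᶜ)` contains
both `a = x i - x j` and `x j' - x i' = -a`, which are dependent.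
-/

open Function Finset Module

namespace ParallelHyperplanes

variable {K E ι : Type*} [Field K] [AddCommGroup E] [Module K E]

def diffSet (x : ι → E) (I J : Finset ι) : Set E :=
  {w | ∃ i ∈ I, ∃ j ∈ J, w = x i - x j}

variable (K) in
def InLinearGeneralPosition (n : ℕ) (s : Set E) : Prop :=
  ∀ g : Fin n → E, Injective g → (∀ t, g t ∈ s) → LinearIndependent K g

namespace InLinearGeneralPosition

variable {n : ℕ} {s : Set E}

theorem linearIndepOn (hs : InLinearGeneralPosition K n s) {u : Finset E} (hus : ↑u ⊆ s)
    (hu : u.card = n) : LinearIndepOn K id (u : Set E) := by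
  let e := u.equivFinOfCardEq hu
  have hrange : Set.range (Subtype.val ∘ e.symm) = u := by
    rw [Set.range_comp, e.symm.range_eq_univ, Set.image_univ, Subtype.range_coe]
  rw [← hrange, linearIndepOn_id_range_iff (Subtype.val_injective.comp e.symm.injective)]
  exact hs _ (Subtype.val_injective.comp e.symm.injective) fun t => hus (e.symm t).2

theorem card_lt_of_subset_submodule [FiniteDimensional K E] (hs : InLinearGeneralPosition K n s)
    (hn : finrank K E ≤ n) {P : Submodule K E} (hP : P ≠ ⊤) {u : Finset E} (hus : ↑u ⊆ s)
    (huP : ↑u ⊆ (P : Set E)) : u.card < n := by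
  by_contra! hu
  obtain ⟨w, hwu, hw⟩ := exists_subset_card_eq hu
  have hspan : Submodule.span K (w : Set E) ≤ P :=
    Submodule.span_le.2 ((coe_subset.2 hwu).trans huP)
  refine lt_irrefl n ?_
  calc n = w.card := hw.symm
    _ = finrank K (Submodule.span K (w : Set E)) :=
      (finrank_span_finset_eq_card (hs.linearIndepOn ((coe_subset.2 hwu).trans hus) hw)).symm
    _ ≤ finrank K P := Submodule.finrank_mono hspan
    _ < finrank K E := Submodule.finrank_lt hP
    _ ≤ n := hn

theorem card_lt_of_neg_mem (hs : InLinearGeneralPosition K n s) (hn : 2 ≤ n) {u : Finset E}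
    (hus : ↑u ⊆ s) {a : E} (ha : a ≠ -a) (hau : a ∈ u) (hnau : -a ∈ u) : u.card < n := by
  classical
  by_contra! hu
  obtain ⟨w, hpair, hwu, hw⟩ := exists_subsuperset_card_eq (s := {a, -a})
    (by simp [insert_subset_iff, hau, hnau]) ((card_le_two).trans hn) hu
  have hpair_indep : LinearIndepOn K id ({a, -a} : Set E) := by
    simpa using (hs.linearIndepOn ((coe_subset.2 hwu).trans hus) hw).mono (coe_subset.2 hpair)
  have ha0 : a ≠ 0 := fun h => ha (by simp [h])
  exact (linearIndepOn_pair_iff id ha ha0).1 hpair_indep (-1) (by simp)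

end InLinearGeneralPosition

variable [Fintype ι] {n : ℕ} {x : ι → E}

theorem not_inLinearGeneralPosition_of_sub_eq_sub [DecidableEq ι] [CharZero K] (hx : Injective x)
    (hn : 2 ≤ n) (hk : n + 2 ≤ Fintype.card ι) {i j i' j' : ι} (hij : i ≠ j) (hij' : i ≠ j')
    (hjj' : j ≠ j') (h : x i - x j = x i' - x j') :
    ¬ InLinearGeneralPosition K n (diffSet x {i, j'} {i, j'}ᶜ) := by
  classical
  intro hs
  have := IsAddTorsionFree.of_isTorsionFree K E
  have hii' : i ≠ i' := by
    rintro rfl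
    exact hjj' (hx (sub_right_injective h))
  have hi'j' : i' ≠ j' := by
    rintro rfl
    exact hij (hx (sub_eq_zero.1 (h.trans (sub_self _))))
  set J : Finset ι := {i, j'}ᶜ
  have hjJ : j ∈ J := by simp [J, hij.symm, hjj']
  have hi'J : i' ∈ J := by simp [J, hii'.symm, hi'j']
  let u := insert (x j' - x i') (J.image fun z => x i - x z)
  have hus : ↑u ⊆ diffSet x {i, j'} J := by
    simp only [u, coe_insert, coe_image, Set.insert_subset_iff, Set.image_subset_iff]
    exact ⟨⟨j', by simp, i', hi'J, rfl⟩, fun z hz => ⟨i, by simp, z, hz, rfl⟩⟩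
  have hu : n ≤ u.card :=
    calc n ≤ J.card := by simp only [J, card_compl, card_pair hij']; omega
      _ = (J.image fun z => x i - x z).card :=
        (card_image_of_injective _ (sub_right_injective.comp hx)).symm
      _ ≤ u.card := card_le_card (subset_insert _ _)
  have ha : x i - x j ≠ -(x i - x j) := by
    rw [Ne, self_eq_neg, sub_eq_zero]
    exact hx.ne hij
  have hau : x i - x j ∈ u := mem_insert_of_mem (mem_image_of_mem _ hjJ)
  have hnau : -(x i - x j) ∈ u := by
    rw [h, neg_sub]
    exact mem_insert_self _ _
  exact (hs.card_lt_of_neg_mem hn hus ha hau hnau).not_ge hu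

theorem card_compl_image_lt [DecidableEq ι] [CharZero K] [FiniteDimensional K E]
    (hn : finrank K E ≤ n) (hx : Injective x)
    (hs : ∀ I J : Finset ι, Disjoint I J → I ∪ J = univ → I.Nonempty → J.Nonempty →
      InLinearGeneralPosition K n (diffSet x I J))
    {φ : Dual K E} (hφ : φ ≠ 0) {r : ι → ι} (hr : ∀ i, φ (x (r i)) = φ (x i)) :
    (univ.image r)ᶜ.card < n := by
  classical
  set J₀ := univ.image r
  have hrJ₀ : ∀ i, r i ∈ J₀ := fun i => mem_image_of_mem r (mem_univ i)
  have hne : ∀ {i j}, i ∈ J₀ᶜ → j ∈ J₀ → i ≠ j := fun hi hj he => mem_compl.1 hi (he ▸ hj)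
  by_contra! hI₀
  have hker : LinearMap.ker φ ≠ ⊤ := by rwa [Ne, LinearMap.ker_eq_top]
  have hn₀ : 0 < n := (Nat.zero_le _).trans_lt ((Submodule.finrank_lt hker).trans_le hn)
  obtain ⟨i₀, hi₀⟩ := card_pos.1 (hn₀.trans_le hI₀)
  set d := fun i => x i - x (r i)
  have hd : (J₀ᶜ.image d).card < n := by
    refine (hs J₀ᶜ J₀ disjoint_compl_left (by rw [union_comm, union_compl]) ⟨i₀, hi₀⟩
      ⟨r i₀, hrJ₀ i₀⟩).card_lt_of_subset_submodule hn hker ?_ ?_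
    · rw [coe_image, Set.image_subset_iff]
      exact fun i hi => ⟨i, hi, r i, hrJ₀ i, rfl⟩
    · rw [coe_image, Set.image_subset_iff]
      intro i _
      simp [d, hr i]
  obtain ⟨i, hi, i', -, hii', hdii'⟩ := exists_ne_map_eq_of_card_lt_of_maps_to
    (hd.trans_le hI₀) fun i hi => mem_image_of_mem d hi
  have hrr : r i ≠ r i' := fun he => hii' (hx (by simpa [d, he] using hdii'))
  have hn2 : 2 ≤ n := Nat.lt_of_le_of_lt (card_pos.2 ⟨_, mem_image_of_mem d hi⟩) hd
  have hk : n + 2 ≤ Fintype.card ι := by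
    have h2 : 2 ≤ J₀.card := (card_pair hrr).symm.trans_le
      (card_le_card (insert_subset (hrJ₀ i) (singleton_subset_iff.2 (hrJ₀ i'))))
    have := card_le_univ J₀
    rw [card_compl] at hI₀
    omega
  refine not_inLinearGeneralPosition_of_sub_eq_sub hx hn2 hk (hne hi (hrJ₀ i))
    (hne hi (hrJ₀ i')) hrr hdii' (hs _ _ disjoint_compl_right (union_compl _)
      (insert_nonempty _ _) ⟨r i, ?_⟩)
  simp [hrr, (hne hi (hrJ₀ i)).symm]

theorem card_sub_lt_card_of_forall_mem [DecidableEq ι] [CharZero K] [FiniteDimensional K E]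
    [Nonempty ι] (hn : finrank K E ≤ n) (hx : Injective x)
    (hs : ∀ I J : Finset ι, Disjoint I J → I ∪ J = univ → I.Nonempty → J.Nonempty →
      InLinearGeneralPosition K n (diffSet x I J))
    {φ : Dual K E} (hφ : φ ≠ 0) {C : Finset K} (hC : ∀ i, φ (x i) ∈ C) :
    Fintype.card ι - n < C.card := by
  let f := fun i => φ (x i)
  have hI₀ := card_compl_image_lt hn hx hs hφ (r := invFun f ∘ f) fun i =>
    invFun_eq (f := f) ⟨i, rfl⟩
  have hJ₀ : (univ.image (invFun f ∘ f)).card ≤ C.card :=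
    calc (univ.image (invFun f ∘ f)).card ≤ (C.image (invFun f)).card :=
          card_le_card (image_subset_iff.2 fun i _ => mem_image_of_mem _ (hC i))
      _ ≤ C.card := card_image_le
  have hJ₀_pos := (univ_nonempty.image (invFun f ∘ f)).card_pos
  rw [card_compl] at hI₀
  omega

end ParallelHyperplanes

open ParallelHyperplanes in
theorem stmt12_general {n k : ℕ} (hk : n < k)
    (x : Fin k → EuclideanSpace ℝ (Fin n)) (hinj : Function.Injective x)
    (hyp : ∀ I J : Finset (Fin k), Disjoint I J → I ∪ J = Finset.univ →
      I.Nonempty → J.Nonempty →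
      ∀ g : Fin n → EuclideanSpace ℝ (Fin n), Function.Injective g →
        (∀ t, ∃ i ∈ I, ∃ j ∈ J, g t = x i - x j) →
        LinearIndependent ℝ g) :
    ¬ CoveredByParallelHyperplanes (Set.range x) (k - n) := by
  rintro ⟨v, hv, C, hC, hmem⟩
  have : Nonempty (Fin k) := ⟨⟨0, by omega⟩⟩
  have hφ : innerₗ _ v ≠ 0 := fun h => hv (inner_self_eq_zero.1 (LinearMap.congr_fun h v))
  have hlt := card_sub_lt_card_of_forall_mem finrank_euclideanSpace_fin.le hinj hyp hφ
    (C := C) fun i => hmem _ ⟨i, rfl⟩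
  rw [Fintype.card_fin] at hlt
  omega

theorem stmt12 {n k : ℕ} (hn : 1 ≤ n) (hk : n < k)
    (x : Fin k → EuclideanSpace ℝ (Fin n)) (hinj : Function.Injective x)
    (hyp : ∀ I J : Finset (Fin k), Disjoint I J → I ∪ J = Finset.univ →
      I.Nonempty → J.Nonempty →
      ∀ g : Fin n → EuclideanSpace ℝ (Fin n), Function.Injective g →
        (∀ t, ∃ i ∈ I, ∃ j ∈ J, g t = x i - x j) →
        LinearIndependent ℝ g) :
    ¬ CoveredByParallelHyperplanes (Set.range x) (k - n) :=
  stmt12_general hk x hinj hyp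
end

section
/- Fix 1 ≤ ℓ ≤ n-1 and assume there exists a set S of n+2 points in {0,±1}ⁿ that cannot be covered by two parallel hyperplanes, together with a bipartite graph on S with girth greater than ℓ and at least ((n+2)/2)^{1+2/(3ℓ-2)} edges. Then there exists an n×d integer matrix A with all entries in {-2,...,2}, d ≥ ((n+2)/2)^{1+2/(3ℓ-2)}, such that any ℓ columns of A are linearly independent. -/
open scoped RealInnerProductSpace

/-!
Put the vertices of `G` at the points `y₀ = 0, y₁ = e₁, …, yₙ = eₙ, yₙ₊₁ = (1, …, 1)` and take
as columns the differences `y_a - y_b` over the edges `ab` of `G`. A relation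
`∑ c_t (y_{a_t} - y_{b_t}) = 0` among `ℓ` columns turns the net flow `z` of `c` into an affine
dependency of the points, and these are the multiples of `(n - 1, -1, …, -1, 1)`. Since the girth
exceeds `ℓ`, the `ℓ` edges form a forest; having at most `n - 1` edges on `n + 2` vertices it has a
component avoiding `y₀` and `yₙ₊₁`, and `z` sums to zero over it, so `z = 0`. A flow on a forest
with zero net flow vanishes, because every edge of a forest is a bridge.
-/

open Finset

section NetFlow

variable {V ι : Type*} [Fintype ι] [DecidableEq V] (a b : ι → V) (c : ι → ℝ)

-- The image of the edge weights under the signed incidence map: `∑ t, c t • (δ (a t) - δ (b t))`.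
def netFlow (u : V) : ℝ :=
  ∑ t, c t * ((if a t = u then 1 else 0) - (if b t = u then 1 else 0))

lemma sum_netFlow (U : Finset V) :
    ∑ u ∈ U, netFlow a b c u =
      ∑ t, c t * ((if a t ∈ U then 1 else 0) - (if b t ∈ U then 1 else 0)) := by
  simp only [netFlow]
  rw [sum_comm]
  refine sum_congr rfl fun t _ => ?_
  rw [← mul_sum, sum_sub_distrib, sum_ite_eq, sum_ite_eq]

lemma sum_netFlow_smul [Fintype V] {M : Type*} [AddCommGroup M] [Module ℝ M] (f : V → M) :
    ∑ u, netFlow a b c u • f u = ∑ t, c t • (f (a t) - f (b t)) := by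
  simp only [netFlow, sum_smul]
  rw [sum_comm]
  refine sum_congr rfl fun t _ => ?_
  simp only [mul_smul, sub_smul, ite_smul, one_smul, zero_smul, smul_sub, ← smul_sum,
    sum_sub_distrib, sum_ite_eq, mem_univ, if_true]

variable {a b c}

lemma sum_netFlow_eq_zero {U : Finset V} (hU : ∀ t, a t ∈ U ↔ b t ∈ U) :
    ∑ u ∈ U, netFlow a b c u = 0 := by
  rw [sum_netFlow]
  exact sum_eq_zero fun t _ => by simp [hU t]

lemma sum_netFlow_eq_of_forall_ne {U : Finset V} {t₀ : ι} (ha : a t₀ ∈ U) (hb : b t₀ ∉ U)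
    (hU : ∀ t ≠ t₀, a t ∈ U ↔ b t ∈ U) :
    ∑ u ∈ U, netFlow a b c u = c t₀ := by
  rw [sum_netFlow, sum_eq_single t₀ (fun t _ ht => by simp [hU t ht]) (by simp)]
  simp [ha, hb]

end NetFlow

namespace SimpleGraph

variable {V : Type*} {G H : SimpleGraph V}

lemma Adj.reachable_iff {x y : V} (h : H.Adj x y) (v : V) : H.Reachable v x ↔ H.Reachable v y :=
  ⟨fun hx => hx.trans h.reachable, fun hy => hy.trans h.symm.reachable⟩

lemma isAcyclic_of_le_of_ncard_edgeSet_lt_girth [Finite V] (hle : H ≤ G)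
    (h : H.edgeSet.ncard < G.girth) : H.IsAcyclic := by
  intro v c hc
  have := Fintype.ofFinite V
  classical
  have hH : c.length ≤ H.edgeSet.ncard := by
    rw [Set.ncard_eq_toFinset_card', ← edgeFinset]
    exact hc.isTrail.length_le_card_edgeFinset
  have hG : G.girth ≤ c.length := by
    simpa using G.girth_le_length ((Walk.isCycle_mapLe hle).mpr hc)
  omega

lemma card_le_ncard_edgeSet_add_two [Finite V] {p q : V}
    (h : ∀ u, H.Reachable p u ∨ H.Reachable q u) : Nat.card V ≤ H.edgeSet.ncard + 2 := by
  have hconn : (H ⊔ edge p q).Connected := by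
    have hp : ∀ u, (H ⊔ edge p q).Reachable p u := by
      intro u
      rcases h u with hu | hu
      · exact hu.mono le_sup_left
      · refine Reachable.trans ?_ (hu.mono le_sup_left)
        rcases eq_or_ne p q with rfl | hpq
        · rfl
        · exact Adj.reachable (Or.inr ((edge_adj p q p q).mpr ⟨by simp, hpq⟩))
    exact (connected_iff_exists_forall_reachable _).mpr ⟨p, hp⟩
  have hcard : (H ⊔ edge p q).edgeSet.ncard ≤ H.edgeSet.ncard + 1 := by
    rw [edgeSet_sup]
    refine (Set.ncard_union_le _ _).trans (add_le_add_right ?_ _)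
    exact (Set.ncard_le_ncard edgeSet_edge_subset).trans (Set.ncard_singleton _).le
  have := hconn.card_vert_le_card_edgeSet_add_one
  rw [Nat.card_coe_set_eq] at this
  omega

theorem IsAcyclic.eq_zero_of_netFlow_eq_zero {ι : Type*} [Fintype ι] [Fintype V] [DecidableEq V]
    {a b : ι → V} {c : ι → ℝ} (hH : H.IsAcyclic) (hadj : ∀ t, H.Adj (a t) (b t))
    (hinj : Function.Injective fun t => s(a t, b t)) (hflow : netFlow a b c = 0) : c = 0 := by
  classical
  funext t₀
  let K := H.deleteEdges {s(a t₀, b t₀)}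
  have hK : ¬K.Reachable (a t₀) (b t₀) := isAcyclic_iff_forall_adj_isBridge.mp hH (hadj t₀)
  have hKadj : ∀ t ≠ t₀, K.Adj (a t) (b t) := fun t ht =>
    (deleteEdges_adj ..).mpr ⟨hadj t, fun h => ht (hinj (by simpa using h))⟩
  calc c t₀ = ∑ u ∈ univ.filter (K.Reachable (a t₀)), netFlow a b c u :=
        (sum_netFlow_eq_of_forall_ne (by simp) (by simpa using hK)
          fun t ht => by simpa using (hKadj t ht).reachable_iff _).symm
    _ = 0 := by simp [hflow]

lemma exists_adj_injective_sym2 [Fintype V] [DecidableRel G.Adj] :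
    ∃ a b : Fin #G.edgeFinset → V,
      (∀ j, G.Adj (a j) (b j)) ∧ Function.Injective fun j => s(a j, b j) := by
  let e : Fin #G.edgeFinset → Sym2 V := fun j => G.edgeFinset.equivFin.symm j
  have he : ∀ j, s((e j).out.1, (e j).out.2) = e j := fun j => (e j).out_eq
  refine ⟨fun j => (e j).out.1, fun j => (e j).out.2, fun j => ?_, fun j k h => ?_⟩
  · rw [← mem_edgeSet, he]
    exact mem_edgeFinset.mp (G.edgeFinset.equivFin.symm j).2
  · simp only [he] at h
    exact G.edgeFinset.equivFin.symm.injective (Subtype.ext h)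

end SimpleGraph

-- The points `0, e₀, …, e_{n-1}, (1, …, 1)` of `{0, 1}ⁿ`, numbered `0, 1, …, n + 1`.
def cornerPoint (n : ℕ) (v : Fin (n + 2)) (i : Fin n) : ℝ :=
  if (v : ℕ) = i + 1 ∨ (v : ℕ) = n + 1 then 1 else 0

lemma exists_cornerPoint_sub_eq_intCast (n : ℕ) (v w : Fin (n + 2)) (i : Fin n) :
    ∃ m : ℤ, cornerPoint n v i - cornerPoint n w i = m ∧ |m| ≤ 1 := by
  unfold cornerPoint
  split_ifs
  exacts [⟨0, by simp⟩, ⟨1, by simp⟩, ⟨-1, by simp⟩, ⟨0, by simp⟩]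

lemma sum_smul_cornerPoint_apply {n : ℕ} (z : Fin (n + 2) → ℝ) (i : Fin n) :
    (∑ v, z v • cornerPoint n v) i = z ⟨i + 1, by omega⟩ + z (Fin.last _) := by
  have hsplit : ∀ v : Fin (n + 2), cornerPoint n v i =
      (if v = ⟨i + 1, by omega⟩ then 1 else 0) + (if v = Fin.last _ then 1 else 0) := by
    intro v
    have := i.isLt
    simp only [cornerPoint, Fin.ext_iff, Fin.val_last]
    split_ifs <;> first | omega | norm_num
  simp [Finset.sum_apply, hsplit, mul_add, sum_add_distrib]

lemma eq_zero_of_sum_smul_cornerPoint_eq_zero {n : ℕ} {z : Fin (n + 2) → ℝ}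
    (hsum : ∑ v, z v = 0) (hdep : ∑ v, z v • cornerPoint n v = 0)
    {U : Finset (Fin (n + 2))} (hU : U.Nonempty) (h0 : 0 ∉ U) (hlast : Fin.last _ ∉ U)
    (hUsum : ∑ v ∈ U, z v = 0) : z = 0 := by
  have hmid : ∀ v, v ≠ 0 → v ≠ Fin.last _ → z v = -z (Fin.last _) := by
    intro v hv0 hvl
    rw [Ne, Fin.ext_iff, Fin.val_zero] at hv0
    rw [Ne, Fin.ext_iff, Fin.val_last] at hvl
    have hv : (v : ℕ) - 1 < n := by omega
    have := sum_smul_cornerPoint_apply z ⟨v - 1, hv⟩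
    have hv' : (⟨(v : ℕ) - 1 + 1, by omega⟩ : Fin (n + 2)) = v := by ext; simp only; omega
    rw [hdep, hv', Pi.zero_apply] at this
    linarith
  have hβ : z (Fin.last _) = 0 := by
    rw [sum_congr rfl fun v hv => hmid v (ne_of_mem_of_not_mem hv h0)
      (ne_of_mem_of_not_mem hv hlast), sum_const, nsmul_eq_mul] at hUsum
    have : (#U : ℝ) ≠ 0 := by exact_mod_cast hU.card_pos.ne'
    simpa [this] using hUsum
  have hne0 : ∀ v, v ≠ 0 → z v = 0 := fun v hv0 => by
    by_cases hvl : v = Fin.last _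
    · rw [hvl, hβ]
    · rw [hmid v hv0 hvl, hβ, neg_zero]
  funext v
  by_cases hv0 : v = 0
  · rw [hv0, Pi.zero_apply, ← hsum, sum_eq_single 0 (fun u _ hu => hne0 u hu) (by simp)]
  · exact hne0 v hv0

theorem linearIndependent_cornerPoint_sub {n : ℕ} {G : SimpleGraph (Fin (n + 2))} {ι : Type*}
    [Fintype ι] {a b : ι → Fin (n + 2)} (hadj : ∀ t, G.Adj (a t) (b t))
    (hinj : Function.Injective fun t => s(a t, b t)) (hgirth : Fintype.card ι < G.girth)
    (hn : Fintype.card ι < n) :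
    LinearIndependent ℝ fun t => cornerPoint n (a t) - cornerPoint n (b t) := by
  rw [Fintype.linearIndependent_iff]
  intro c hc
  let H := SimpleGraph.fromEdgeSet (Set.range fun t => s(a t, b t))
  have hHadj : ∀ t, H.Adj (a t) (b t) := fun t => ⟨⟨t, rfl⟩, (hadj t).ne⟩
  have hHG : H ≤ G := fun x y ⟨⟨t, ht⟩, _⟩ => by
    rw [← SimpleGraph.mem_edgeSet, ← ht]
    exact hadj t
  have hHcard : H.edgeSet.ncard ≤ Fintype.card ι := by
    rw [← Nat.card_eq_fintype_card, ← Set.ncard_range_of_injective hinj]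
    exact Set.ncard_le_ncard (by rw [SimpleGraph.edgeSet_fromEdgeSet]; exact Set.sdiff_subset)
  have hH : H.IsAcyclic := SimpleGraph.isAcyclic_of_le_of_ncard_edgeSet_lt_girth hHG (by omega)
  refine congrFun (hH.eq_zero_of_netFlow_eq_zero hHadj hinj ?_)
  obtain ⟨u, hu0, hulast⟩ : ∃ u, ¬H.Reachable 0 u ∧ ¬H.Reachable (Fin.last _) u := by
    by_contra! h
    have := SimpleGraph.card_le_ncard_edgeSet_add_two fun u => or_iff_not_imp_left.mpr (h u)
    rw [Nat.card_eq_fintype_card, Fintype.card_fin] at this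
    omega
  refine eq_zero_of_sum_smul_cornerPoint_eq_zero (U := univ.filter (H.Reachable u)) ?_ ?_
    ⟨u, by simp⟩ (by simpa using fun h => hu0 h.symm) (by simpa using fun h => hulast h.symm) ?_
  · simpa using sum_netFlow_eq_zero (c := c) (U := univ) fun t => by simp
  · rw [sum_netFlow_smul]
    simpa [smul_sub] using hc
  · exact sum_netFlow_eq_zero fun t => by simpa using (hHadj t).reachable_iff u

theorem stmt19_general {n ℓ : ℕ} (hℓ : 1 ≤ ℓ) (hℓn : ℓ ≤ n - 1)
    -- ... together with a bipartite graph on `S` ...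
    (G : SimpleGraph (Fin (n + 2))) [DecidableRel G.Adj]
    -- ... with girth greater than `ℓ` and many edges.
    (hgirth : (ℓ : ℕ∞) < G.girth)
    (hedges : ((n + 2 : ℝ) / 2) ^ ((1 : ℝ) + 2 / (3 * (ℓ : ℝ) - 2)) ≤ G.edgeFinset.card) :
    ∃ d : ℕ, ((n + 2 : ℝ) / 2) ^ ((1 : ℝ) + 2 / (3 * (ℓ : ℝ) - 2)) ≤ (d : ℝ) ∧
      ∃ A : Matrix (Fin n) (Fin d) ℝ,
        (∀ i j, ∃ m : ℤ, A i j = (m : ℝ) ∧ |A i j| ≤ 2) ∧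
        ∀ g : Fin ℓ → Fin d, Function.Injective g →
          LinearIndependent ℝ (fun t => (fun i => A i (g t))) := by
  obtain ⟨a, b, hadj, hinj⟩ := G.exists_adj_injective_sym2
  refine ⟨_, hedges, fun i j => cornerPoint n (a j) i - cornerPoint n (b j) i, fun i j => ?_,
    fun g hg => ?_⟩
  · obtain ⟨m, hm, hm1⟩ := exists_cornerPoint_sub_eq_intCast n (a j) (b j) i
    refine ⟨m, hm, ?_⟩
    dsimp only
    rw [hm, ← Int.cast_abs]
    exact_mod_cast hm1.trans one_le_two
  · exact linearIndependent_cornerPoint_sub (fun t => hadj (g t)) (hinj.comp hg)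
      (by simpa using hgirth) (by rw [Fintype.card_fin]; omega)

theorem stmt19 {n ℓ : ℕ} (hℓ : 1 ≤ ℓ) (hℓn : ℓ ≤ n - 1)
    -- a set `S` of `n+2` points with coordinates in `{0, ±1}` ...
    (x : Fin (n + 2) → EuclideanSpace ℝ (Fin n)) (hinj : Function.Injective x)
    (hcoords : ∀ i t, x i t = 0 ∨ x i t = 1 ∨ x i t = -1)
    -- ... not coverable by two parallel hyperplanes ...
    (hcover : ¬ CoveredByParallelHyperplanes (Set.range x) 2)
    -- ... together with a bipartite graph on `S` ...
    (G : SimpleGraph (Fin (n + 2))) [DecidableRel G.Adj]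
    (I J : Finset (Fin (n + 2))) (hIJ : Disjoint I J) (hunion : I ∪ J = Finset.univ)
    (hbip : ∀ a b, G.Adj a b → (a ∈ I ∧ b ∈ J) ∨ (a ∈ J ∧ b ∈ I))
    -- ... with girth greater than `ℓ` and many edges.
    (hgirth : (ℓ : ℕ∞) < G.girth)
    (hedges : ((n + 2 : ℝ) / 2) ^ ((1 : ℝ) + 2 / (3 * (ℓ : ℝ) - 2)) ≤ G.edgeFinset.card) :
    ∃ d : ℕ, ((n + 2 : ℝ) / 2) ^ ((1 : ℝ) + 2 / (3 * (ℓ : ℝ) - 2)) ≤ (d : ℝ) ∧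
      ∃ A : Matrix (Fin n) (Fin d) ℝ,
        (∀ i j, ∃ m : ℤ, A i j = (m : ℝ) ∧ |A i j| ≤ 2) ∧
        ∀ g : Fin ℓ → Fin d, Function.Injective g →
          LinearIndependent ℝ (fun t => (fun i => A i (g t))) :=
  stmt19_general hℓ hℓn G hgirth hedges
end
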